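/- For β ∈ (-1,1) and the skew Brownian motion density p_β(1,x,y), define H_g(x) = ∫_ℝ (|y| - |x|) · p_β(1,x,y) dy. Then ∫_ℝ H_g(x) · (1 + sgn(x)β) dx = 1. -/

import Mathlib

open MeasureTheory Set

/-- Transition density of the skew Brownian motion with parameter `β`. -/
noncomputable def skewDensity (β t x y : ℝ) : ℝ :=
  (1 / Real.sqrt (2 * Real.pi * t)) * Real.exp (-(x - y) ^ 2 / (2 * t))
    + β * Real.sign y * ((1 / Real.sqrt (2 * Real.pi * t)) * Real.exp (-(|x| + |y|) ^ 2 / (2 * t)))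

/-!
Write `φ` for the standard normal density, `Z` for a standard normal variable and
`Q a = P(Z > a)`. Against `|y| - |x|` the skew part `β sgn y φ(|x| + |y|)` of `p_β(1, x, ·)` is
odd in `y`, so `H_g(x) = 𝔼|x + Z| - |x| = 2 𝔼(Z - |x|)⁺`. This is even in `x`, so the `β sgn x`
part of the stationary measure drops out as well, and
`∫ H_g = 4 ∫₀^∞ 𝔼(Z - a)⁺ da = 2 𝔼[(Z⁺)²] = 1`. The last integral is evaluated through
`𝔼(Z - a)⁺ = φ a - a Q a` and its antiderivative `(a φ a - (1 + a²) Q a) / 2`.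
-/

open Filter Topology ProbabilityTheory NNReal

local notation "φ" => gaussianPDFReal 0 1

lemma Real.monotone_sign : Monotone Real.sign := by
  intro a b hab
  rcases lt_trichotomy a 0 with ha | rfl | ha
  · rw [Real.sign_of_neg ha]
    rcases Real.sign_apply_eq b with h | h | h <;> rw [h] <;> norm_num
  · rcases hab.lt_or_eq with hb | rfl
    · simp [Real.sign_of_pos hb]
    · rfl
  · rw [Real.sign_of_pos ha, Real.sign_of_pos (ha.trans_le hab)]

lemma Real.norm_sign_le_one (x : ℝ) : ‖Real.sign x‖ ≤ 1 := by
  rcases Real.sign_apply_eq x with h | h | h <;> simp [h]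

lemma MeasureTheory.Integrable.sign_mul {f : ℝ → ℝ} (hf : Integrable f) :
    Integrable fun x => Real.sign x * f x :=
  hf.bdd_mul Real.monotone_sign.measurable.aestronglyMeasurable (.of_forall Real.norm_sign_le_one)

lemma integral_eq_zero_of_odd {f : ℝ → ℝ} (hf : ∀ x, f (-x) = -f x) : ∫ x, f x = 0 := by
  have h := integral_neg_eq_self f volume
  simp only [hf, integral_neg] at h
  linarith

lemma integral_mul_one_add_sign_mul {F : ℝ → ℝ} (hF : Integrable F) (heven : ∀ x, F (-x) = F x)
    (β : ℝ) : ∫ x, F x * (1 + Real.sign x * β) = ∫ x, F x := by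
  have hsplit : ∀ x, F x * (1 + Real.sign x * β) = F x + β * (Real.sign x * F x) := fun x => by
    ring
  simp_rw [hsplit]
  rw [integral_add hF (hF.sign_mul.const_mul β), integral_const_mul,
    integral_eq_zero_of_odd (f := fun x => Real.sign x * F x) fun x => by
      rw [Real.sign_neg, heven]; ring, mul_zero, add_zero]

lemma gaussianPDFReal_zero_one_apply (x : ℝ) :
    φ x = (√(2 * Real.pi))⁻¹ * Real.exp (-(1 / 2) * x ^ 2) := by
  simp only [gaussianPDFReal_def, NNReal.coe_one, mul_one, sub_zero]
  ring_nf

lemma gaussianPDFReal_zero_neg (v : ℝ≥0) (x : ℝ) :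
    gaussianPDFReal 0 v (-x) = gaussianPDFReal 0 v x := by
  simp [gaussianPDFReal_def]

lemma gaussianPDFReal_zero_abs (v : ℝ≥0) (x : ℝ) :
    gaussianPDFReal 0 v |x| = gaussianPDFReal 0 v x := by
  simp [gaussianPDFReal_def]

lemma gaussianPDFReal_zero_le_of_abs_le (v : ℝ≥0) {x y : ℝ} (h : |x| ≤ |y|) :
    gaussianPDFReal 0 v y ≤ gaussianPDFReal 0 v x := by
  simp only [gaussianPDFReal_def, sub_zero]
  have hsq : x ^ 2 ≤ y ^ 2 := sq_le_sq.mpr h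
  gcongr ?_ * Real.exp ?_
  exact div_le_div_of_nonneg_right (neg_le_neg hsq) (by positivity)

lemma hasDerivAt_gaussianPDFReal (μ : ℝ) (v : ℝ≥0) (x : ℝ) :
    HasDerivAt (gaussianPDFReal μ v) (-((x - μ) / v) * gaussianPDFReal μ v x) x := by
  have h : HasDerivAt (fun x => -(x - μ) ^ 2 / (2 * v)) (-((x - μ) / v)) x :=
    ((((hasDerivAt_id x).sub_const μ).pow 2).neg.div_const (2 * (v : ℝ))).congr_deriv
      (by simp only [id, Nat.cast_ofNat, mul_one]; ring)
  rw [gaussianPDFReal_def]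
  exact (h.exp.const_mul (√(2 * Real.pi * v))⁻¹).congr_deriv (by ring)

@[fun_prop]
lemma continuous_gaussianPDFReal (μ : ℝ) (v : ℝ≥0) : Continuous (gaussianPDFReal μ v) :=
  continuous_iff_continuousAt.2 fun x => (hasDerivAt_gaussianPDFReal μ v x).continuousAt

lemma integrable_mul_gaussianPDFReal_zero_one : Integrable fun x => x * φ x := by
  simp_rw [gaussianPDFReal_zero_one_apply, mul_left_comm _ (√(2 * Real.pi))⁻¹]
  exact (integrable_mul_exp_neg_mul_sq (by norm_num)).const_mul _

lemma integral_mul_gaussianPDFReal_zero_one : ∫ x, x * φ x = 0 :=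
  integral_eq_zero_of_odd fun x => by rw [gaussianPDFReal_zero_neg, neg_mul]

lemma tendsto_rpow_abs_mul_gaussianPDFReal_zero_one (s : ℝ) :
    Tendsto (fun x => |x| ^ s * φ x) (cocompact ℝ) (𝓝 0) := by
  simp_rw [gaussianPDFReal_zero_one_apply, mul_left_comm _ (√(2 * Real.pi))⁻¹]
  simpa using (tendsto_rpow_abs_mul_exp_neg_mul_sq_cocompact (by norm_num : (0 : ℝ) < 1 / 2)
    s).const_mul (√(2 * Real.pi))⁻¹

lemma tendsto_gaussianPDFReal_zero_one_atTop : Tendsto φ atTop (𝓝 0) := by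
  simpa using (tendsto_rpow_abs_mul_gaussianPDFReal_zero_one 0).mono_left atTop_le_cocompact

lemma tendsto_mul_gaussianPDFReal_zero_one_atTop : Tendsto (fun x => x * φ x) atTop (𝓝 0) := by
  refine ((tendsto_rpow_abs_mul_gaussianPDFReal_zero_one 1).mono_left atTop_le_cocompact).congr' ?_
  filter_upwards [eventually_ge_atTop 0] with x hx
  rw [Real.rpow_one, abs_of_nonneg hx]

lemma setIntegral_Ioi_mul_gaussianPDFReal_zero_one (a : ℝ) : ∫ t in Ioi a, t * φ t = φ a := by
  simpa using integral_Ioi_of_hasDerivAt_of_tendsto (f := fun t => -φ t) (m := 0)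
    (hasDerivAt_gaussianPDFReal 0 1 a).continuousAt.neg.continuousWithinAt
    (fun t _ => (hasDerivAt_gaussianPDFReal 0 1 t).neg.congr_deriv (by simp))
    integrable_mul_gaussianPDFReal_zero_one.integrableOn
    (by simpa using tendsto_gaussianPDFReal_zero_one_atTop.neg)

noncomputable def gaussianTail (a : ℝ) : ℝ := ∫ t in Ioi a, φ t

lemma gaussianTail_nonneg (a : ℝ) : 0 ≤ gaussianTail a :=
  setIntegral_nonneg measurableSet_Ioi fun t _ => gaussianPDFReal_nonneg 0 1 t

lemma gaussianTail_zero : gaussianTail 0 = 1 / 2 := by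
  have h := integral_comp_abs (f := φ)
  simp only [gaussianPDFReal_zero_abs, integral_gaussianPDFReal_eq_one 0 one_ne_zero] at h
  rw [gaussianTail]
  linarith

lemma hasDerivAt_gaussianTail (a : ℝ) : HasDerivAt gaussianTail (-φ a) a := by
  have hφ := integrable_gaussianPDFReal 0 1
  have h : gaussianTail = fun b => gaussianTail 0 - ∫ t in (0 : ℝ)..b, φ t := by
    ext b
    rw [← intervalIntegral.integral_Ioi_sub_Ioi' hφ.integrableOn hφ.integrableOn, gaussianTail,
      gaussianTail, sub_sub_cancel]
  rw [h]
  exact (intervalIntegral.integral_hasDerivAt_right hφ.intervalIntegrable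
    ((continuous_gaussianPDFReal 0 1).stronglyMeasurableAtFilter _ _)
    (continuous_gaussianPDFReal 0 1).continuousAt).const_sub _

lemma continuous_gaussianTail : Continuous gaussianTail :=
  continuous_iff_continuousAt.2 fun a => (hasDerivAt_gaussianTail a).continuousAt

lemma mul_gaussianTail_le (a : ℝ) : a * gaussianTail a ≤ φ a := by
  rw [gaussianTail, ← integral_const_mul, ← setIntegral_Ioi_mul_gaussianPDFReal_zero_one a]
  refine setIntegral_mono_on ((integrable_gaussianPDFReal 0 1).const_mul a).integrableOn
    integrable_mul_gaussianPDFReal_zero_one.integrableOn measurableSet_Ioi fun t ht => ?_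
  exact mul_le_mul_of_nonneg_right (le_of_lt ht) (gaussianPDFReal_nonneg 0 1 t)

noncomputable def gaussianLoss (a : ℝ) : ℝ := ∫ t, max (t - a) 0 * φ t

lemma max_sub_mul_gaussianPDFReal_eq_indicator (a : ℝ) :
    (fun t => max (t - a) 0 * φ t) = (Ioi a).indicator fun t => (t - a) * φ t := by
  ext t
  by_cases ht : a < t
  · rw [indicator_of_mem (show t ∈ Ioi a from ht), max_eq_left (sub_nonneg.2 ht.le)]
  · rw [indicator_of_notMem (show t ∉ Ioi a from ht), max_eq_right (sub_nonpos.2 (not_lt.1 ht)),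
      zero_mul]

lemma integrableOn_sub_mul_gaussianPDFReal (a : ℝ) :
    IntegrableOn (fun t => (t - a) * φ t) (Ioi a) := by
  simp_rw [sub_mul]
  exact (integrable_mul_gaussianPDFReal_zero_one.sub
    ((integrable_gaussianPDFReal 0 1).const_mul a)).integrableOn

lemma integrable_max_sub_mul_gaussianPDFReal (a : ℝ) :
    Integrable fun t => max (t - a) 0 * φ t := by
  rw [max_sub_mul_gaussianPDFReal_eq_indicator]
  exact (integrableOn_sub_mul_gaussianPDFReal a).integrable_indicator measurableSet_Ioi

lemma gaussianLoss_eq (a : ℝ) : gaussianLoss a = φ a - a * gaussianTail a := by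
  rw [gaussianLoss, max_sub_mul_gaussianPDFReal_eq_indicator, integral_indicator measurableSet_Ioi]
  simp_rw [sub_mul]
  rw [integral_sub integrable_mul_gaussianPDFReal_zero_one.integrableOn
    ((integrable_gaussianPDFReal 0 1).const_mul a).integrableOn, integral_const_mul,
    setIntegral_Ioi_mul_gaussianPDFReal_zero_one, gaussianTail]

lemma integral_abs_add_sub_abs_mul_gaussianPDFReal (a : ℝ) :
    ∫ z, (|a + z| - |a|) * φ z = 2 * gaussianLoss |a| := by
  wlog ha : 0 ≤ a generalizing a
  · rw [← abs_neg a, ← this (-a) (by linarith), ← integral_neg_eq_self]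
    simp only [gaussianPDFReal_zero_neg, abs_neg]
    congr 1 with z
    rw [← abs_neg (a + -z), neg_add, neg_neg]
  have hsplit : ∀ z, (|a + z| - |a|) * φ z = z * φ z + 2 * (max (-z - a) 0 * φ (-z)) := by
    intro z
    rw [gaussianPDFReal_zero_neg, abs_of_nonneg ha]
    rcases le_total 0 (a + z) with h | h
    · rw [abs_of_nonneg h, max_eq_right (by linarith)]; ring
    · rw [abs_of_nonpos h, max_eq_left (by linarith)]; ring
  have hrefl : Integrable fun z => max (-z - a) 0 * φ (-z) :=
    (integrable_max_sub_mul_gaussianPDFReal a).comp_neg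
  simp_rw [hsplit]
  rw [integral_add integrable_mul_gaussianPDFReal_zero_one (hrefl.const_mul 2), integral_const_mul,
    integral_neg_eq_self (fun z => max (z - a) 0 * φ z), integral_mul_gaussianPDFReal_zero_one,
    abs_of_nonneg ha, gaussianLoss, zero_add]

lemma gaussianLoss_nonneg (a : ℝ) : 0 ≤ gaussianLoss a :=
  integral_nonneg fun t => mul_nonneg (le_max_right _ _) (gaussianPDFReal_nonneg 0 1 t)

lemma continuous_gaussianLoss : Continuous gaussianLoss := by
  simp_rw [funext gaussianLoss_eq]
  exact (continuous_gaussianPDFReal 0 1).sub (continuous_id.mul continuous_gaussianTail)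

lemma integrable_gaussianLoss_abs : Integrable fun x => gaussianLoss |x| := by
  refine (integrable_gaussianPDFReal 0 1).mono'
    (continuous_gaussianLoss.comp continuous_abs).aestronglyMeasurable (.of_forall fun x => ?_)
  rw [Real.norm_of_nonneg (gaussianLoss_nonneg _), gaussianLoss_eq, gaussianPDFReal_zero_abs]
  linarith [mul_nonneg (abs_nonneg x) (gaussianTail_nonneg |x|)]

lemma tendsto_one_add_sq_mul_gaussianTail_atTop :
    Tendsto (fun a => (1 + a ^ 2) * gaussianTail a) atTop (𝓝 0) := by
  have hbound := tendsto_gaussianPDFReal_zero_one_atTop.add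
    tendsto_mul_gaussianPDFReal_zero_one_atTop
  rw [add_zero] at hbound
  refine tendsto_of_tendsto_of_tendsto_of_le_of_le' tendsto_const_nhds hbound
    (.of_forall fun a => mul_nonneg (by positivity) (gaussianTail_nonneg a)) ?_
  filter_upwards [eventually_ge_atTop 1] with a ha
  have hQ : gaussianTail a ≤ a * gaussianTail a := le_mul_of_one_le_left (gaussianTail_nonneg a) ha
  have haQ := mul_gaussianTail_le a
  nlinarith

lemma setIntegral_Ioi_gaussianLoss : ∫ a in Ioi 0, gaussianLoss a = 1 / 4 := by
  let G : ℝ → ℝ := fun a => (a * φ a - (1 + a ^ 2) * gaussianTail a) / 2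
  have hG : ∀ a, HasDerivAt G (gaussianLoss a) a := fun a =>
    ((((hasDerivAt_id a).mul (hasDerivAt_gaussianPDFReal 0 1 a)).sub
      (((hasDerivAt_pow 2 a).const_add 1).mul (hasDerivAt_gaussianTail a))).div_const 2
      ).congr_deriv (by simp only [gaussianLoss_eq, id]; push_cast; ring)
  have hlim : Tendsto G atTop (𝓝 0) := by
    simpa using (tendsto_mul_gaussianPDFReal_zero_one_atTop.sub
      tendsto_one_add_sq_mul_gaussianTail_atTop).div_const 2
  have hint : IntegrableOn gaussianLoss (Ioi 0) :=
    integrable_gaussianLoss_abs.integrableOn.congr_fun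
      (fun x (hx : 0 < x) => by simp only [abs_of_pos hx]) measurableSet_Ioi
  rw [integral_Ioi_of_hasDerivAt_of_tendsto (hG 0).continuousAt.continuousWithinAt
    (fun a _ => hG a) hint hlim]
  norm_num [G, gaussianTail_zero]

lemma integral_gaussianLoss_abs : ∫ x, gaussianLoss |x| = 1 / 2 := by
  rw [integral_comp_abs, setIntegral_Ioi_gaussianLoss]; norm_num

lemma skewDensity_eq (β x y : ℝ) (t : ℝ≥0) :
    skewDensity β t x y =
      gaussianPDFReal 0 t (y - x) + β * Real.sign y * gaussianPDFReal 0 t (|x| + |y|) := by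
  simp only [skewDensity, gaussianPDFReal_def, sub_zero, one_div, sub_sq_comm x y]

lemma integrable_abs_add_sub_abs_mul_gaussianPDFReal (a : ℝ) :
    Integrable fun z => (|a + z| - |a|) * φ z := by
  refine integrable_mul_gaussianPDFReal_zero_one.norm.mono'
    (by fun_prop : Continuous fun z => (|a + z| - |a|) * φ z).aestronglyMeasurable
    (.of_forall fun z => ?_)
  rw [norm_mul, norm_mul, Real.norm_of_nonneg (gaussianPDFReal_nonneg 0 1 z)]
  exact mul_le_mul_of_nonneg_right (by simpa using abs_abs_sub_abs_le_abs_sub (a + z) a)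
    (gaussianPDFReal_nonneg 0 1 z)

lemma integrable_abs_sub_abs_mul_gaussianPDFReal_abs_add (x : ℝ) :
    Integrable fun y => (|y| - |x|) * φ (|x| + |y|) := by
  refine (integrable_mul_gaussianPDFReal_zero_one.norm.add
    ((integrable_gaussianPDFReal 0 1).const_mul |x|)).mono'
    (by fun_prop : Continuous fun y => (|y| - |x|) * φ (|x| + |y|)).aestronglyMeasurable
    (.of_forall fun y => ?_)
  have hφ : φ (|x| + |y|) ≤ φ y := gaussianPDFReal_zero_le_of_abs_le 1
    ((le_add_of_nonneg_left (abs_nonneg x)).trans (le_abs_self _))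
  show ‖(|y| - |x|) * φ (|x| + |y|)‖ ≤ ‖y * φ y‖ + |x| * φ y
  rw [norm_mul, norm_mul, Real.norm_of_nonneg (gaussianPDFReal_nonneg 0 1 _),
    Real.norm_of_nonneg (gaussianPDFReal_nonneg 0 1 _), Real.norm_eq_abs]
  have habs : |(|y| - |x|)| ≤ |y| + |x| := (abs_sub _ _).trans (by simp)
  calc |(|y| - |x|)| * φ (|x| + |y|) ≤ (|y| + |x|) * φ y :=
        mul_le_mul habs hφ (gaussianPDFReal_nonneg 0 1 _) (by positivity)
    _ = |y| * φ y + |x| * φ y := add_mul _ _ _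

lemma integral_abs_sub_abs_mul_skewDensity (β x : ℝ) :
    ∫ y, (|y| - |x|) * skewDensity β 1 x y = 2 * gaussianLoss |x| := by
  have hsplit : ∀ y, (|y| - |x|) * skewDensity β 1 x y = (|x + (y - x)| - |x|) * φ (y - x) +
      β * (Real.sign y * ((|y| - |x|) * φ (|x| + |y|))) := fun y => by
    rw [← NNReal.coe_one, skewDensity_eq, add_sub_cancel]; ring
  have hskew : ∫ y, Real.sign y * ((|y| - |x|) * φ (|x| + |y|)) = 0 :=
    integral_eq_zero_of_odd fun y => by rw [Real.sign_neg, abs_neg]; ring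
  simp_rw [hsplit]
  rw [integral_add ((integrable_abs_add_sub_abs_mul_gaussianPDFReal x).comp_sub_right x)
    ((integrable_abs_sub_abs_mul_gaussianPDFReal_abs_add x).sign_mul.const_mul β),
    integral_const_mul, hskew, mul_zero, add_zero,
    integral_sub_right_eq_self (fun z => (|x + z| - |x|) * φ z),
    integral_abs_add_sub_abs_mul_gaussianPDFReal]

theorem integral_Hg_stationary_general (β : ℝ) :
    (∫ x : ℝ, (∫ y : ℝ, (|y| - |x|) * skewDensity β 1 x y) * (1 + Real.sign x * β)) = 1 := by
  simp_rw [integral_abs_sub_abs_mul_skewDensity]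
  rw [integral_mul_one_add_sign_mul (integrable_gaussianLoss_abs.const_mul 2)
    (fun x => by rw [abs_neg]), integral_const_mul, integral_gaussianLoss_abs]
  norm_num

/-- For `β ∈ (-1,1)`, with `H_g(x) = ∫_ℝ (|y| - |x|) p_β(1,x,y) dy`, one has
`∫_ℝ H_g(x) (1 + sgn(x)β) dx = 1`. -/
theorem integral_Hg_stationary (β : ℝ) (hβ : β ∈ Set.Ioo (-1 : ℝ) 1) :
    (∫ x : ℝ, (∫ y : ℝ, (|y| - |x|) * skewDensity β 1 x y) * (1 + Real.sign x * β)) = 1 :=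
  integral_Hg_stationary_general β
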